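/- arXiv:1803.05113 — 4 statements merged into one kernel-verified Lean document; each statement's English description precedes it below -/
import Mathlib

section
/- For the map ρ₍₅,₈₎ : ℂ⁸ → ℂ⁶ defined componentwise by ρ₁(z) = i(-z₁z₆ + z₃z₈ + z₂z₅ - z₄z₇), ρ₂(z) = z₁z₆ + z₃z₈ + z₂z₅ + z₄z₇, ρ₃(z) = z₂z₆ + z₃z₇ - z₁z₅ - z₄z₈, ρ₄(z) = i(-z₁z₅ + z₄z₈ - z₂z₆ + z₃z₇), ρ₅(z) = i(-z₁z₈ - z₂z₇ - z₃z₆ - z₄z₅), ρ₆(z) = z₁z₈ + z₂z₇ - z₃z₆ - z₄z₅, every point in the range satisfies ρ₁(z)² + ⋯ + ρ₆(z)² = 0. -/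
open Complex

/-- The range of `ρ₍₅,₈₎` lies in the null quadric `Q⁵ ⊂ ℂ⁶`. -/
theorem rho58_mem_null_quadric (z₁ z₂ z₃ z₄ z₅ z₆ z₇ z₈ : ℂ) :
    (Complex.I * (-z₁ * z₆ + z₃ * z₈ + z₂ * z₅ - z₄ * z₇)) ^ 2
      + (z₁ * z₆ + z₃ * z₈ + z₂ * z₅ + z₄ * z₇) ^ 2
      + (z₂ * z₆ + z₃ * z₇ - z₁ * z₅ - z₄ * z₈) ^ 2
      + (Complex.I * (-z₁ * z₅ + z₄ * z₈ - z₂ * z₆ + z₃ * z₇)) ^ 2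
      + (Complex.I * (-z₁ * z₈ - z₂ * z₇ - z₃ * z₆ - z₄ * z₅)) ^ 2
      + (z₁ * z₈ + z₂ * z₇ - z₃ * z₆ - z₄ * z₅) ^ 2 = 0 := by
  have h : Complex.I^2 = -1 := Complex.I_sq
  ring_nf
  rw [h]
  ring
end

section
/- For all z, w ∈ ℂ⁸, the Hermitian pairing ρ₍₅,₈₎(z) · ρ₍₅,₈₎(w) equals 2ϱ(z,w), where ϱ(u,v) = [u₁v̄₁+u₂v̄₂+u₃v̄₃+u₄v̄₄][u₅v̄₅+u₆v̄₆+u₇v̄₇+u₈v̄₈] + [u₇v̄₁−u₈v̄₂+u₅v̄₃−u₆v̄₄][u₂v̄₈−u₃v̄₅+u₄v̄₆−u₁v̄₇]. -/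
open Complex ComplexConjugate

set_option maxHeartbeats 2000000 in
/-- `ρ₍₅,₈₎(z) · ρ₍₅,₈₎(w) = 2ϱ(z,w)`. -/
theorem rho58_pairing (z₁ z₂ z₃ z₄ z₅ z₆ z₇ z₈ w₁ w₂ w₃ w₄ w₅ w₆ w₇ w₈ : ℂ) :
    (Complex.I * (-z₁ * z₆ + z₃ * z₈ + z₂ * z₅ - z₄ * z₇))
        * conj (Complex.I * (-w₁ * w₆ + w₃ * w₈ + w₂ * w₅ - w₄ * w₇))
      + (z₁ * z₆ + z₃ * z₈ + z₂ * z₅ + z₄ * z₇)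
        * conj (w₁ * w₆ + w₃ * w₈ + w₂ * w₅ + w₄ * w₇)
      + (z₂ * z₆ + z₃ * z₇ - z₁ * z₅ - z₄ * z₈)
        * conj (w₂ * w₆ + w₃ * w₇ - w₁ * w₅ - w₄ * w₈)
      + (Complex.I * (-z₁ * z₅ + z₄ * z₈ - z₂ * z₆ + z₃ * z₇))
        * conj (Complex.I * (-w₁ * w₅ + w₄ * w₈ - w₂ * w₆ + w₃ * w₇))
      + (Complex.I * (-z₁ * z₈ - z₂ * z₇ - z₃ * z₆ - z₄ * z₅))
        * conj (Complex.I * (-w₁ * w₈ - w₂ * w₇ - w₃ * w₆ - w₄ * w₅))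
      + (z₁ * z₈ + z₂ * z₇ - z₃ * z₆ - z₄ * z₅)
        * conj (w₁ * w₈ + w₂ * w₇ - w₃ * w₆ - w₄ * w₅)
      = 2 * ((z₁ * conj w₁ + z₂ * conj w₂ + z₃ * conj w₃ + z₄ * conj w₄)
              * (z₅ * conj w₅ + z₆ * conj w₆ + z₇ * conj w₇ + z₈ * conj w₈)
            + (z₇ * conj w₁ - z₈ * conj w₂ + z₅ * conj w₃ - z₆ * conj w₄)
              * (z₂ * conj w₈ - z₃ * conj w₅ + z₄ * conj w₆ - z₁ * conj w₇)) := by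
  simp only [map_mul, map_add, map_sub, map_neg, Complex.conj_I]
  ring_nf
  simp only [Complex.I_sq]
  ring
end

section
/- The map ρ₍₅,₈₎ : ℂ⁸ → ℂ⁶ is invariant under the SU(2) action T(g) = L† V(g) L, i.e. ρ₍₅,₈₎(T(g)z) = ρ₍₅,₈₎(z) for all g ∈ SU(2) and z ∈ ℂ⁸. -/
open Complex Matrix

/-- The map `ρ₍₅,₈₎ : ℂ⁸ → ℂ⁶`. -/
noncomputable def rho58 (z : Fin 8 → ℂ) : Fin 6 → ℂ :=
  ![Complex.I * (-z 0 * z 5 + z 2 * z 7 + z 1 * z 4 - z 3 * z 6),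
    z 0 * z 5 + z 2 * z 7 + z 1 * z 4 + z 3 * z 6,
    z 1 * z 5 + z 2 * z 6 - z 0 * z 4 - z 3 * z 7,
    Complex.I * (-z 0 * z 4 + z 3 * z 7 - z 1 * z 5 + z 2 * z 6),
    Complex.I * (-z 0 * z 7 - z 1 * z 6 - z 2 * z 5 - z 3 * z 4),
    z 0 * z 7 + z 1 * z 6 - z 2 * z 5 - z 3 * z 4]

/-- The signed permutation matrix `L`. -/
noncomputable def Lmat : Matrix (Fin 8) (Fin 8) ℂ :=
  !![1, 0, 0, 0, 0, 0, 0, 0;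
     0, 0, 0, 0, 0, 0, 1, 0;
     0, 0, 1, 0, 0, 0, 0, 0;
     0, 0, 0, 0, 1, 0, 0, 0;
     0, 0, 0, -1, 0, 0, 0, 0;
     0, 0, 0, 0, 0, 1, 0, 0;
     0, -1, 0, 0, 0, 0, 0, 0;
     0, 0, 0, 0, 0, 0, 0, 1]

/-- The block-diagonal matrix `V(g) = g ⊕ g ⊕ g ⊕ g` for a `2×2` matrix `g`. -/
noncomputable def Vmat (g : Matrix (Fin 2) (Fin 2) ℂ) : Matrix (Fin 8) (Fin 8) ℂ :=
  Matrix.of fun i j =>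
    if (i : ℕ) / 2 = (j : ℕ) / 2 then
      g ⟨(i : ℕ) % 2, Nat.mod_lt _ two_pos⟩ ⟨(j : ℕ) % 2, Nat.mod_lt _ two_pos⟩
    else 0

lemma vec8_0 {α : Type*} (a0 a1 a2 a3 a4 a5 a6 a7 : α) :
    ![a0,a1,a2,a3,a4,a5,a6,a7] (0:Fin 8) = a0 := rfl
lemma vec8_1 {α : Type*} (a0 a1 a2 a3 a4 a5 a6 a7 : α) :
    ![a0,a1,a2,a3,a4,a5,a6,a7] (1:Fin 8) = a1 := rfl
lemma vec8_2 {α : Type*} (a0 a1 a2 a3 a4 a5 a6 a7 : α) :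
    ![a0,a1,a2,a3,a4,a5,a6,a7] (2:Fin 8) = a2 := rfl
lemma vec8_3 {α : Type*} (a0 a1 a2 a3 a4 a5 a6 a7 : α) :
    ![a0,a1,a2,a3,a4,a5,a6,a7] (3:Fin 8) = a3 := rfl
lemma vec8_4 {α : Type*} (a0 a1 a2 a3 a4 a5 a6 a7 : α) :
    ![a0,a1,a2,a3,a4,a5,a6,a7] (4:Fin 8) = a4 := rfl
lemma vec8_5 {α : Type*} (a0 a1 a2 a3 a4 a5 a6 a7 : α) :
    ![a0,a1,a2,a3,a4,a5,a6,a7] (5:Fin 8) = a5 := rfl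
lemma vec8_6 {α : Type*} (a0 a1 a2 a3 a4 a5 a6 a7 : α) :
    ![a0,a1,a2,a3,a4,a5,a6,a7] (6:Fin 8) = a6 := rfl
lemma vec8_7 {α : Type*} (a0 a1 a2 a3 a4 a5 a6 a7 : α) :
    ![a0,a1,a2,a3,a4,a5,a6,a7] (7:Fin 8) = a7 := rfl

lemma vec6_0 {α : Type*} (a0 a1 a2 a3 a4 a5 : α) (h : 0 < 6) :
    ![a0,a1,a2,a3,a4,a5] (⟨0, h⟩ : Fin 6) = a0 := rfl
lemma vec6_1 {α : Type*} (a0 a1 a2 a3 a4 a5 : α) (h : 1 < 6) :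
    ![a0,a1,a2,a3,a4,a5] (⟨1, h⟩ : Fin 6) = a1 := rfl
lemma vec6_2 {α : Type*} (a0 a1 a2 a3 a4 a5 : α) (h : 2 < 6) :
    ![a0,a1,a2,a3,a4,a5] (⟨2, h⟩ : Fin 6) = a2 := rfl
lemma vec6_3 {α : Type*} (a0 a1 a2 a3 a4 a5 : α) (h : 3 < 6) :
    ![a0,a1,a2,a3,a4,a5] (⟨3, h⟩ : Fin 6) = a3 := rfl
lemma vec6_4 {α : Type*} (a0 a1 a2 a3 a4 a5 : α) (h : 4 < 6) :
    ![a0,a1,a2,a3,a4,a5] (⟨4, h⟩ : Fin 6) = a4 := rfl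
lemma vec6_5 {α : Type*} (a0 a1 a2 a3 a4 a5 : α) (h : 5 < 6) :
    ![a0,a1,a2,a3,a4,a5] (⟨5, h⟩ : Fin 6) = a5 := rfl

set_option maxHeartbeats 1600000 in
/-- `ρ₍₅,₈₎` is invariant under the `SU(2)` action `T(g) = L† V(g) L`. -/
theorem rho58_SU2_invariant (g : Matrix.specialUnitaryGroup (Fin 2) ℂ) (z : Fin 8 → ℂ) :
    rho58 ((Lmatᴴ * Vmat (g : Matrix (Fin 2) (Fin 2) ℂ) * Lmat).mulVec z) = rho58 z := by
  obtain ⟨G, hG⟩ := g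
  rw [Matrix.mem_specialUnitaryGroup_iff] at hG
  have hdet : G 0 0 * G 1 1 - G 0 1 * G 1 0 = 1 := by
    rw [← Matrix.det_fin_two]; exact hG.2
  set w := (Lmatᴴ * Vmat G * Lmat).mulVec z with hw
  have h0 : w 0 = G 0 0 * z 0 + G 0 1 * z 6 := by
    simp only [hw, ← Matrix.mulVec_mulVec]
    simp [Lmat, Vmat, Matrix.mulVec, dotProduct, Fin.sum_univ_succ, Fin.succ, vec8_0, vec8_1, vec8_2, vec8_3, vec8_4, vec8_5, vec8_6, vec8_7]
    try ring
  have h1 : w 1 = G 0 0 * z 1 - G 0 1 * z 7 := by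
    simp only [hw, ← Matrix.mulVec_mulVec]
    simp [Lmat, Vmat, Matrix.mulVec, dotProduct, Fin.sum_univ_succ, Fin.succ, vec8_0, vec8_1, vec8_2, vec8_3, vec8_4, vec8_5, vec8_6, vec8_7]
    try ring
  have h2 : w 2 = G 0 0 * z 2 + G 0 1 * z 4 := by
    simp only [hw, ← Matrix.mulVec_mulVec]
    simp [Lmat, Vmat, Matrix.mulVec, dotProduct, Fin.sum_univ_succ, Fin.succ, vec8_0, vec8_1, vec8_2, vec8_3, vec8_4, vec8_5, vec8_6, vec8_7]
    try ring
  have h3 : w 3 = G 0 0 * z 3 - G 0 1 * z 5 := by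
    simp only [hw, ← Matrix.mulVec_mulVec]
    simp [Lmat, Vmat, Matrix.mulVec, dotProduct, Fin.sum_univ_succ, Fin.succ, vec8_0, vec8_1, vec8_2, vec8_3, vec8_4, vec8_5, vec8_6, vec8_7]
    try ring
  have h4 : w 4 = G 1 0 * z 2 + G 1 1 * z 4 := by
    simp only [hw, ← Matrix.mulVec_mulVec]
    simp [Lmat, Vmat, Matrix.mulVec, dotProduct, Fin.sum_univ_succ, Fin.succ, vec8_0, vec8_1, vec8_2, vec8_3, vec8_4, vec8_5, vec8_6, vec8_7]
    try ring
  have h5 : w 5 = -(G 1 0 * z 3) + G 1 1 * z 5 := by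
    simp only [hw, ← Matrix.mulVec_mulVec]
    simp [Lmat, Vmat, Matrix.mulVec, dotProduct, Fin.sum_univ_succ, Fin.succ, vec8_0, vec8_1, vec8_2, vec8_3, vec8_4, vec8_5, vec8_6, vec8_7]
    try ring
  have h6 : w 6 = G 1 0 * z 0 + G 1 1 * z 6 := by
    simp only [hw, ← Matrix.mulVec_mulVec]
    simp [Lmat, Vmat, Matrix.mulVec, dotProduct, Fin.sum_univ_succ, Fin.succ, vec8_0, vec8_1, vec8_2, vec8_3, vec8_4, vec8_5, vec8_6, vec8_7]
    try ring
  have h7 : w 7 = -(G 1 0 * z 1) + G 1 1 * z 7 := by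
    simp only [hw, ← Matrix.mulVec_mulVec]
    simp [Lmat, Vmat, Matrix.mulVec, dotProduct, Fin.sum_univ_succ, Fin.succ, vec8_0, vec8_1, vec8_2, vec8_3, vec8_4, vec8_5, vec8_6, vec8_7]
    try ring
  funext i
  fin_cases i <;>
  · simp only [rho58, Matrix.cons_val_zero, Matrix.cons_val_one, Matrix.head_cons,
      Matrix.cons_val_succ, Fin.mk_zero, Fin.mk_one, Fin.isValue,
      Matrix.cons_val', Matrix.empty_val', Matrix.cons_val_fin_one, Matrix.head_fin_const,
      h0, h1, h2, h3, h4, h5, h6, h7,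
      vec6_0, vec6_1, vec6_2, vec6_3, vec6_4, vec6_5]
    first |
      linear_combination (Complex.I * (-z 0 * z 5 + z 2 * z 7 + z 1 * z 4 - z 3 * z 6)) * hdet |
      linear_combination (z 0 * z 5 + z 2 * z 7 + z 1 * z 4 + z 3 * z 6) * hdet |
      linear_combination (z 1 * z 5 + z 2 * z 6 - z 0 * z 4 - z 3 * z 7) * hdet |
      linear_combination (Complex.I * (-z 0 * z 4 + z 3 * z 7 - z 1 * z 5 + z 2 * z 6)) * hdet |
      linear_combination (Complex.I * (-z 0 * z 7 - z 1 * z 6 - z 2 * z 5 - z 3 * z 4)) * hdet |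
      linear_combination (z 0 * z 7 + z 1 * z 6 - z 2 * z 5 - z 3 * z 4) * hdet
end

section
/- For all z, w ∈ ℂ⁴ and ℏ > 0, (1/2π) ∫₀^{2π} exp((1/ℏ) z · T(e^{iψ})w) dψ = Σ_{k≥0} (1/((k!)² ℏ^{2k})) (z₁ conj(w₁) + z₂ conj(w₂))^k (z₃ conj(w₃) + z₄ conj(w₄))^k, where T(e^{iψ}) = diag(e^{-iψ}, e^{-iψ}, e^{iψ}, e^{iψ}) and z · v = Σⱼ zⱼ conj(vⱼ). -/
/-!
With `A = z₁ w̄₁ + z₂ w̄₂`, `B = z₃ w̄₃ + z₄ w̄₄`, `a = A/ℏ` and `b = B/ℏ`, the integrand is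
`exp (a e^{iψ} + b e^{-iψ})`. Expand `exp` in its power series (the sup bound `(‖a‖ + ‖b‖)ⁿ/n!`
lets the sum pass through the integral) and each power binomially. Over a full period only the
frequency-zero monomials survive, i.e. the middle terms of even powers, so the `2k`-th term
contributes `2π · (2k choose k) (ab)ᵏ/(2k)! = 2π (ab)ᵏ/(k!)²`.
-/

open Complex ComplexConjugate
open scoped Real

lemma hasSum_intervalIntegral_exp {f : ℝ → ℂ} {M : ℝ} (a b : ℝ) (hf : Continuous f)
    (hM : ∀ x, ‖f x‖ ≤ M) :
    HasSum (fun n : ℕ => ∫ x in a..b, f x ^ n / n.factorial) (∫ x in a..b, exp (f x)) := by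
  refine intervalIntegral.hasSum_integral_of_dominated_convergence
    (fun n _ => M ^ n / n.factorial) (fun n => by fun_prop) (fun n => ?_)
    (.of_forall fun _ _ => Real.summable_pow_div_factorial M) intervalIntegrable_const
    (.of_forall fun x _ => by rw [exp_eq_exp_ℂ]; exact NormedSpace.expSeries_div_hasSum_exp _)
  refine .of_forall fun x _ => ?_
  rw [norm_div, norm_pow, norm_natCast]
  gcongr
  exact hM x

lemma integral_exp_int_mul_I (m : ℤ) :
    ∫ ψ in (0 : ℝ)..(2 * π), exp (m * I * ψ) = if m = 0 then (2 * π : ℂ) else 0 := by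
  split_ifs with hm
  · simp [hm]
  have hmI : (m : ℂ) * I ≠ 0 := by simp [hm]
  have hperiod : exp (m * I * (2 * π : ℝ)) = 1 := by
    rw [← exp_int_mul_two_pi_mul_I m]; push_cast; ring_nf
  rw [integral_exp_mul_complex hmI, hperiod]
  simp

lemma add_exp_mul_I_pow (a b : ℂ) (n : ℕ) (ψ : ℝ) :
    (a * exp (I * ψ) + b * exp (-I * ψ)) ^ n
      = ∑ j ∈ Finset.range (n + 1),
          n.choose j * a ^ j * b ^ (n - j) * exp (((2 * j - n : ℤ) : ℂ) * I * ψ) := by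
  rw [add_pow]
  refine Finset.sum_congr rfl fun j hj => ?_
  have hjn : j ≤ n := Nat.lt_succ_iff.1 (Finset.mem_range.1 hj)
  have hexp : exp (I * ψ) ^ j * exp (-I * ψ) ^ (n - j) = exp (((2 * j - n : ℤ) : ℂ) * I * ψ) := by
    rw [← exp_nat_mul, ← exp_nat_mul, ← exp_add]
    push_cast [Nat.cast_sub hjn]
    ring_nf
  rw [← hexp]
  ring

lemma integral_add_exp_mul_I_pow (a b : ℂ) (n : ℕ) :
    ∫ ψ in (0 : ℝ)..(2 * π), (a * exp (I * ψ) + b * exp (-I * ψ)) ^ n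
      = 2 * π * ∑ j ∈ Finset.range (n + 1),
          if 2 * j = n then n.choose j * a ^ j * b ^ (n - j) else 0 := by
  simp_rw [add_exp_mul_I_pow]
  rw [intervalIntegral.integral_finsetSum fun j _ => by apply Continuous.intervalIntegrable; fun_prop,
    Finset.mul_sum]
  refine Finset.sum_congr rfl fun j _ => ?_
  rw [intervalIntegral.integral_const_mul, integral_exp_int_mul_I]
  split_ifs <;> first | omega | ring

lemma integral_add_exp_mul_I_pow_two_mul (a b : ℂ) (k : ℕ) :
    ∫ ψ in (0 : ℝ)..(2 * π), (a * exp (I * ψ) + b * exp (-I * ψ)) ^ (2 * k)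
      = 2 * π * ((2 * k).choose k * (a * b) ^ k) := by
  rw [integral_add_exp_mul_I_pow, Finset.sum_eq_single_of_mem k (Finset.mem_range.2 (by omega))
    fun j _ hjk => if_neg (by omega), if_pos rfl, show 2 * k - k = k by omega]
  ring

lemma integral_add_exp_mul_I_pow_two_mul_add_one (a b : ℂ) (k : ℕ) :
    ∫ ψ in (0 : ℝ)..(2 * π), (a * exp (I * ψ) + b * exp (-I * ψ)) ^ (2 * k + 1) = 0 := by
  rw [integral_add_exp_mul_I_pow, Finset.sum_eq_zero fun j _ => if_neg (by omega), mul_zero]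

lemma hasSum_integral_exp_add_exp_mul_I (a b : ℂ) :
    HasSum (fun k : ℕ => 2 * π * ((a * b) ^ k / (k.factorial : ℂ) ^ 2))
      (∫ ψ in (0 : ℝ)..(2 * π), exp (a * exp (I * ψ) + b * exp (-I * ψ))) := by
  have hbound : ∀ ψ : ℝ, ‖a * exp (I * ψ) + b * exp (-I * ψ)‖ ≤ ‖a‖ + ‖b‖ := fun ψ => by
    refine (norm_add_le _ _).trans ?_
    simp [norm_exp]
  have hseries := hasSum_intervalIntegral_exp 0 (2 * π) (by fun_prop) hbound
  simp_rw [intervalIntegral.integral_div] at hseries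
  have hodd : ∀ n ∉ Set.range (2 * ·), (∫ ψ in (0 : ℝ)..(2 * π),
      (a * exp (I * ψ) + b * exp (-I * ψ)) ^ n) / n.factorial = 0 := by
    intro n hn
    obtain ⟨k, rfl⟩ : Odd n := Nat.not_even_iff_odd.1 fun ⟨k, hk⟩ => hn ⟨k, show 2 * k = n by omega⟩
    rw [integral_add_exp_mul_I_pow_two_mul_add_one, zero_div]
  refine ((mul_right_injective₀ two_ne_zero).hasSum_iff hodd).2 hseries |>.congr_fun fun k => ?_
  simp only [Function.comp_apply, integral_add_exp_mul_I_pow_two_mul,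
    Nat.cast_choose ℂ (show k ≤ 2 * k by omega), show 2 * k - k = k by omega]
  have : ((2 * k).factorial : ℂ) ≠ 0 := Nat.cast_ne_zero.2 (Nat.factorial_ne_zero _)
  field_simp

theorem Q4_circle_average_general (ℏ : ℝ) (z₁ z₂ z₃ z₄ w₁ w₂ w₃ w₄ : ℂ) :
    (1 / (2 * (Real.pi : ℂ))) * ∫ ψ in (0 : ℝ)..(2 * Real.pi),
        Complex.exp ((1 / (ℏ : ℂ)) *
          (z₁ * conj (Complex.exp (-Complex.I * ψ) * w₁)
            + z₂ * conj (Complex.exp (-Complex.I * ψ) * w₂)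
            + z₃ * conj (Complex.exp (Complex.I * ψ) * w₃)
            + z₄ * conj (Complex.exp (Complex.I * ψ) * w₄)))
      = ∑' k : ℕ, (1 / (((k.factorial : ℂ)) ^ 2 * (ℏ : ℂ) ^ (2 * k)))
          * (z₁ * conj w₁ + z₂ * conj w₂) ^ k * (z₃ * conj w₃ + z₄ * conj w₄) ^ k := by
  set A := z₁ * conj w₁ + z₂ * conj w₂ with hA
  set B := z₃ * conj w₃ + z₄ * conj w₄ with hB
  have hconj (ψ : ℝ) (s : ℂ) (hs : conj s = -s) : conj (exp (s * ψ)) = exp (-s * ψ) := by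
    rw [← exp_conj, map_mul, hs, conj_ofReal]
  have hintegrand (ψ : ℝ) : (1 / (ℏ : ℂ)) *
      (z₁ * conj (exp (-I * ψ) * w₁) + z₂ * conj (exp (-I * ψ) * w₂)
        + z₃ * conj (exp (I * ψ) * w₃) + z₄ * conj (exp (I * ψ) * w₄))
      = A / ℏ * exp (I * ψ) + B / ℏ * exp (-I * ψ) := by
    rw [map_mul, map_mul, map_mul, map_mul, hconj ψ I (conj_I), hconj ψ (-I) (by simp), neg_neg, hA, hB]
    ring
  simp_rw [hintegrand]
  refine (((hasSum_integral_exp_add_exp_mul_I _ _).mul_left (1 / (2 * π : ℂ))).congr_fun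
    fun k => ?_).tsum_eq.symm
  have : (π : ℂ) ≠ 0 := by exact_mod_cast Real.pi_ne_zero
  field_simp
  rw [div_pow, mul_pow, pow_mul, mul_comm ((k.factorial : ℂ) ^ 2), div_div]

/-- The circle average of `exp((1/ℏ) z · T(e^{iψ})w)` over `S¹` equals the series `Q₄(z,w)`. -/
theorem Q4_circle_average (ℏ : ℝ) (hℏ : 0 < ℏ) (z₁ z₂ z₃ z₄ w₁ w₂ w₃ w₄ : ℂ) :
    (1 / (2 * (Real.pi : ℂ))) * ∫ ψ in (0 : ℝ)..(2 * Real.pi),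
        Complex.exp ((1 / (ℏ : ℂ)) *
          (z₁ * conj (Complex.exp (-Complex.I * ψ) * w₁)
            + z₂ * conj (Complex.exp (-Complex.I * ψ) * w₂)
            + z₃ * conj (Complex.exp (Complex.I * ψ) * w₃)
            + z₄ * conj (Complex.exp (Complex.I * ψ) * w₄)))
      = ∑' k : ℕ, (1 / (((k.factorial : ℂ)) ^ 2 * (ℏ : ℂ) ^ (2 * k)))
          * (z₁ * conj w₁ + z₂ * conj w₂) ^ k * (z₃ * conj w₃ + z₄ * conj w₄) ^ k :=
  Q4_circle_average_general ℏ z₁ z₂ z₃ z₄ w₁ w₂ w₃ w₄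
end
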